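/- Let F: C → D be a functor between essentially small categories satisfying property (F). If C is a quasi-Gröbner category and F is essentially surjective, then D is a quasi-Gröbner category. -/

import Mathlib

open CategoryTheory

universe w v u v₂ u₂

/-- A functor `S : C → Set` is orderable: each `S(c)` carries a well-order such that
every induced map `S(c) → S(c')` is strictly order-preserving. -/
def IsOrderable {C : Type u} [Category.{v} C] (S : C ⥤ Type w) : Prop :=
  ∃ r : ∀ c : C, S.obj c → S.obj c → Prop,
    (∀ c : C, IsWellOrder (S.obj c) (r c)) ∧
    ∀ {c c' : C} (h : c ⟶ c') (x y : S.obj c), r c x y → r c' (S.map h x) (S.map h y)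

/-- The preorder on `⋃_c S(c)`: `x ≤ y` iff some morphism of `C` pushes `x` to `y`.
The associated poset `|S|` is its quotient. -/
def SPreorder {C : Type u} [Category.{v} C] (S : C ⥤ Type w)
    (x y : Σ c : C, S.obj c) : Prop :=
  ∃ h : x.1 ⟶ y.1, S.map h x.2 = y.2

/-- The poset `|S|` associated to `S` is Noetherian: every infinite sequence contains
indices `i < j` with `x i ≤ x j`. -/
def FunctorNoetherian {C : Type u} [Category.{v} C] (S : C ⥤ Type w) : Prop :=
  ∀ x : ℕ → Σ c : C, S.obj c, ∃ i j : ℕ, i < j ∧ SPreorder S (x i) (x j)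

/-- A category is Gröbner if, for every object `c`, the functor `Hom(c, -)` is orderable
and the associated poset is Noetherian. -/
def IsGrobner (C : Type u) [Category.{v} C] : Prop :=
  ∀ c : C, IsOrderable (coyoneda.obj (Opposite.op c)) ∧
    FunctorNoetherian (coyoneda.obj (Opposite.op c))

/-- Property (F) for a functor `F : C ⥤ D`. -/
def PropertyF {C : Type u} [Category.{v} C] {D : Type u₂} [Category.{v₂} D]
    (F : C ⥤ D) : Prop :=
  ∀ d : D, ∃ (n : ℕ) (c : Fin n → C) (δ : ∀ i, d ⟶ F.obj (c i)),
    ∀ (c' : C) (f : d ⟶ F.obj c'), ∃ (i : Fin n) (γ : c i ⟶ c'), f = δ i ≫ F.map γ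

/-- A witness that `D` is quasi-Gröbner: a Gröbner category `C` together with an
essentially surjective functor `C ⥤ D` satisfying property (F). -/
structure GrobnerCover (D : Type u₂) [Category.{v₂} D] : Type (max (u₂ + 1) (v₂ + 1)) where
  C : Type u₂
  [instC : Category.{v₂} C]
  F : C ⥤ D
  grobner : IsGrobner C
  essSurj : F.EssSurj
  propF : PropertyF F

/-- A category is quasi-Gröbner if it admits a Gröbner cover. -/
def IsQuasiGrobner (D : Type u₂) [Category.{v₂} D] : Prop :=
  Nonempty (GrobnerCover D)

universe v₃ u₃

theorem PropertyF.of_finite {C : Type u} [Category.{v} C] {D : Type u₂} [Category.{v₂} D]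
    {F : C ⥤ D}
    (h : ∀ d : D, ∃ (ι : Type) (_ : Finite ι) (c : ι → C) (δ : ∀ i, d ⟶ F.obj (c i)),
      ∀ (c' : C) (f : d ⟶ F.obj c'), ∃ (i : ι) (γ : c i ⟶ c'), f = δ i ≫ F.map γ) :
    PropertyF F := by
  intro d
  obtain ⟨ι, _, c, δ, hδ⟩ := h d
  let e := Finite.equivFin ι
  refine ⟨Nat.card ι, fun k => c (e.symm k), fun k => δ (e.symm k), fun c' f => ?_⟩
  obtain ⟨i, γ, hγ⟩ := hδ c' f
  obtain ⟨k, rfl⟩ := e.symm.surjective i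
  exact ⟨k, γ, hγ⟩

theorem PropertyF.comp {C' : Type u₃} [Category.{v₃} C'] {C : Type u} [Category.{v} C]
    {D : Type u₂} [Category.{v₂} D] {G : C' ⥤ C} {F : C ⥤ D} (hG : PropertyF G)
    (hF : PropertyF F) : PropertyF (G ⋙ F) := by
  refine PropertyF.of_finite fun d => ?_
  obtain ⟨n, c, δ, hδ⟩ := hF d
  choose m c' ε hε using fun i => hG (c i)
  refine ⟨Σ i, Fin (m i), inferInstance, fun k => c' k.1 k.2,
    fun k => δ k.1 ≫ F.map (ε k.1 k.2), fun c₀ f => ?_⟩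
  obtain ⟨i, γ, rfl⟩ := hδ (G.obj c₀) f
  obtain ⟨j, γ', rfl⟩ := hε i c₀ γ
  exact ⟨⟨i, j⟩, γ', by simp⟩

/-- Let `F : C ⥤ D` be a functor between essentially small categories satisfying
property (F). If `C` is quasi-Gröbner and `F` is essentially surjective, then `D` is
quasi-Gröbner. -/
theorem isQuasiGrobner_of_propertyF {C : Type u} [Category.{v} C] {D : Type u}
    [Category.{v} D] (F : C ⥤ D) (hF : PropertyF F) (hC : IsQuasiGrobner C)
    (hsurj : F.EssSurj) : IsQuasiGrobner D := by
  obtain ⟨⟨C', G, hG, hGs, hGF⟩⟩ := hC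
  exact ⟨⟨C', G ⋙ F, hG, Functor.essSurj_comp G F, hGF.comp hF⟩⟩
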